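/- Assume N > 0, γ > 0, p̂ = N/γ, K > 0, c_i ≥ 0. If (p_1, …, p_n) ∈ [0, p̂]^n is a Nash equilibrium of the restricted game with utilities u_i^r, then the profile of supply functions S_i(p) = K·max(p − p_i, 0), i = 1, …, n, is a Nash equilibrium of the pay-as-bid auction game with strategy space A_K: for every i and every T ∈ A_K, u_i(T, S_{-i}) ≤ u_i(S_i, S_{-i}). -/

import Mathlib

open Set

/-- A feasible supply function on `[0, phat]`: continuous, nondecreasing, zero at zero. -/
def Feasible (phat : ℝ) (S : ℝ → ℝ) : Prop :=
  ContinuousOn S (Icc 0 phat) ∧ MonotoneOn S (Icc 0 phat) ∧ S 0 = 0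

/-- `p` is a market-clearing price for the profile `S` with demand `D(p) = N - γ p`. -/
def Clears (N γ : ℝ) {n : ℕ} (S : Fin n → ℝ → ℝ) (p : ℝ) : Prop :=
  p ∈ Icc 0 (N / γ) ∧ N - γ * p = ∑ i, S i p

/-- Pay-as-bid utility of an agent with cost coefficient `c`, supply `S`,
at clearing price `pstar`. -/
noncomputable def utility (c : ℝ) (S : ℝ → ℝ) (pstar : ℝ) : ℝ :=
  pstar * S pstar - (∫ p in (0:ℝ)..pstar, S p) - c * S pstar ^ 2

/-- `S` is `K`-Lipschitz on `[0, phat]`. -/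
def KLip (phat K : ℝ) (S : ℝ → ℝ) : Prop :=
  ∀ x ∈ Icc 0 phat, ∀ y ∈ Icc 0 phat, |S x - S y| ≤ K * |x - y|

/-- Restricted pay-as-bid utility at clearing price `phi` and own parameter `q`. -/
noncomputable def uir (K c phi q : ℝ) : ℝ :=
  phi * (K * max (phi - q) 0) - (K * max (phi - q) 0) ^ 2 / (2 * K)
    - c * (K * max (phi - q) 0) ^ 2

/-!
Let `T` be a deviation of agent `i` with clearing price `q`. Replace it by the ramp
`p ↦ K · max (p - t) 0` with `t = q - T q / K`, which supplies the same quantity `T q` at `q`.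
Since `T ≥ 0` and `T` is `K`-Lipschitz, the ramp lies below `T` on `[0, q]`, so in the utility
it subtracts a smaller integral while the other terms are unchanged; it also leaves the
clearing price at `q`. Hence `T` does no better than the restricted deviation `t`, which by the
equilibrium condition does no better than `p_i`.
-/

open intervalIntegral MeasureTheory

def ramp (K a p : ℝ) : ℝ := K * max (p - a) 0

lemma ramp_eq_zero_of_le {K a p : ℝ} (h : p ≤ a) : ramp K a p = 0 := by
  rw [ramp, max_eq_right (sub_nonpos.2 h), mul_zero]

lemma ramp_eq_of_le {K a p : ℝ} (h : a ≤ p) : ramp K a p = K * (p - a) := by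
  rw [ramp, max_eq_left (sub_nonneg.2 h)]

lemma continuous_ramp (K a : ℝ) : Continuous (ramp K a) := by
  unfold ramp; fun_prop

lemma monotone_ramp {K : ℝ} (hK : 0 ≤ K) (a : ℝ) : Monotone (ramp K a) :=
  fun _ _ h => mul_le_mul_of_nonneg_left (max_le_max (by linarith) le_rfl) hK

lemma ramp_sub_div_self {K s : ℝ} (hK : 0 < K) (hs : 0 ≤ s) (q : ℝ) :
    ramp K (q - s / K) q = s := by
  rw [ramp_eq_of_le (by linarith [div_nonneg hs hK.le]), sub_sub_cancel,
    mul_div_cancel₀ _ hK.ne']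

lemma integral_ramp_of_le {K a b : ℝ} (hb : 0 ≤ b) (hba : b ≤ a) :
    ∫ p in (0:ℝ)..b, ramp K a p = 0 := by
  have hzero : EqOn (ramp K a) 0 (uIcc 0 b) := fun p hp =>
    ramp_eq_zero_of_le ((uIcc_of_le hb ▸ hp).2.trans hba)
  simp [integral_congr hzero]

lemma integral_ramp (K : ℝ) {a b : ℝ} (ha : 0 ≤ a) (hb : 0 ≤ b) :
    ∫ p in (0:ℝ)..b, ramp K a p = K * max (b - a) 0 ^ 2 / 2 := by
  rcases le_total b a with hba | hab
  · rw [integral_ramp_of_le hb hba, max_eq_right (sub_nonpos.2 hba)]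
    ring
  have hlin : EqOn (ramp K a) (fun p => K * (p - a)) (uIcc a b) := fun p hp =>
    ramp_eq_of_le (uIcc_of_le hab ▸ hp).1
  have hint := (continuous_ramp K a).intervalIntegrable (μ := volume)
  rw [← integral_add_adjacent_intervals (hint 0 a) (hint a b), integral_ramp_of_le ha le_rfl,
    integral_congr hlin, max_eq_left (sub_nonneg.2 hab)]
  rw [integral_comp_sub_right (fun p => K * p), sub_self, intervalIntegral.integral_const_mul,
    integral_id]
  ring

lemma utility_ramp (c : ℝ) {K a b : ℝ} (hK : K ≠ 0) (ha : 0 ≤ a) (hb : 0 ≤ b) :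
    utility c (ramp K a) b = uir K c b a := by
  rw [utility, uir, integral_ramp K ha hb, ramp]
  field_simp

lemma utility_le_utility_of_le {c q : ℝ} {S T : ℝ → ℝ} (hq : 0 ≤ q)
    (hS : IntervalIntegrable S volume 0 q) (hT : IntervalIntegrable T volume 0 q)
    (hle : ∀ p ∈ Icc 0 q, S p ≤ T p) (heq : S q = T q) :
    utility c T q ≤ utility c S q := by
  rw [utility, utility, heq]
  linarith [integral_mono_on hq hS hT hle]

lemma Feasible.nonneg {M p : ℝ} {T : ℝ → ℝ} (hT : Feasible M T) (hp : p ∈ Icc 0 M) :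
    0 ≤ T p :=
  hT.2.2 ▸ hT.2.1 ⟨le_rfl, hp.1.trans hp.2⟩ hp hp.1

lemma Feasible.intervalIntegrable {M q : ℝ} {T : ℝ → ℝ} (hT : Feasible M T)
    (hq : q ∈ Icc 0 M) : IntervalIntegrable T volume 0 q :=
  (hT.1.mono (uIcc_of_le hq.1 ▸ Icc_subset_Icc le_rfl hq.2)).intervalIntegrable

section Lipschitz

variable {M K q : ℝ} {T : ℝ → ℝ}

lemma KLip.sub_apply_div_mem_Icc (hLip : KLip M K T) (hT : Feasible M T) (hK : 0 < K)
    (hq : q ∈ Icc 0 M) : q - T q / K ∈ Icc 0 M := by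
  have h0 : (0:ℝ) ∈ Icc 0 M := ⟨le_rfl, hq.1.trans hq.2⟩
  have hTq : T q ≤ K * q := by
    simpa [hT.2.2, abs_of_nonneg (hT.nonneg hq), abs_of_nonneg hq.1] using hLip q hq 0 h0
  have hdiv : T q / K ≤ q := (div_le_iff₀ hK).2 (by linarith)
  exact ⟨by linarith, by linarith [div_nonneg (hT.nonneg hq) hK.le, hq.2]⟩

lemma KLip.ramp_le (hLip : KLip M K T) (hT : Feasible M T) (hK : 0 < K)
    (hq : q ∈ Icc 0 M) {p : ℝ} (hp : p ∈ Icc 0 q) : ramp K (q - T q / K) p ≤ T p := by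
  have hpM : p ∈ Icc 0 M := ⟨hp.1, hp.2.trans hq.2⟩
  have hdrop : T q - T p ≤ K * (q - p) := by
    simpa [abs_of_nonneg (sub_nonneg.2 hp.2)] using (abs_le.1 (hLip q hq p hpM)).2
  have hline : K * (p - (q - T q / K)) = T q - K * (q - p) := by
    field_simp
    ring
  rw [ramp, mul_max_of_nonneg _ _ hK.le, mul_zero, hline]
  exact max_le (by linarith) (hT.nonneg hpM)

end Lipschitz

lemma Clears.unique {N γ p q : ℝ} {n : ℕ} {S : Fin n → ℝ → ℝ} (hγ : 0 < γ)
    (hS : ∀ j, MonotoneOn (S j) (Icc 0 (N / γ))) (hp : Clears N γ S p)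
    (hq : Clears N γ S q) : p = q := by
  have hle : ∀ {a b}, Clears N γ S a → Clears N γ S b → a ≤ b → b ≤ a := by
    intro a b ha hb hab
    have : ∑ j, S j a ≤ ∑ j, S j b := Finset.sum_le_sum fun j _ => hS j ha.1 hb.1 hab
    nlinarith [ha.2, hb.2]
  rcases le_total p q with h | h
  exacts [le_antisymm h (hle hp hq h), le_antisymm (hle hq hp h) h]

lemma Clears.update_of_eq {N γ p : ℝ} {n : ℕ} {S : Fin n → ℝ → ℝ} {i : Fin n}
    {T T' : ℝ → ℝ} (h : Clears N γ (Function.update S i T) p) (hTT' : T p = T' p) :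
    Clears N γ (Function.update S i T') p := by
  refine ⟨h.1, h.2.trans (Finset.sum_congr rfl fun j _ => ?_)⟩
  rcases eq_or_ne j i with rfl | hj
  · simpa using hTT'
  · simp [hj]

theorem stmt16_general (n : ℕ) (N γ K : ℝ) (hγ : 0 < γ) (hK : 0 < K)
    (c : Fin n → ℝ)
    (φ : (Fin n → ℝ) → ℝ)
    (hφ : ∀ x : Fin n → ℝ, (∀ j, x j ∈ Icc 0 (N / γ)) →
      φ x ∈ Icc 0 (N / γ) ∧ N - γ * φ x = ∑ j, K * max (φ x - x j) 0)
    (pv : Fin n → ℝ) (hpv : ∀ j, pv j ∈ Icc 0 (N / γ))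
    (hNE : ∀ i : Fin n, ∀ t ∈ Icc (0:ℝ) (N / γ),
      uir K (c i) (φ (Function.update pv i t)) t ≤ uir K (c i) (φ pv) (pv i)) :
    ∀ i : Fin n, ∀ T, Feasible (N / γ) T → KLip (N / γ) K T →
      ∀ pstar q,
        Clears N γ (fun j => fun p => K * max (p - pv j) 0) pstar →
        Clears N γ (Function.update (fun j => fun p => K * max (p - pv j) 0) i T) q →
        utility (c i) T q ≤ utility (c i) (fun p => K * max (p - pv i) 0) pstar := by
  intro i T hT hLip pstar q hpstar hq
  set t := q - T q / K
  have ht : t ∈ Icc 0 (N / γ) := hLip.sub_apply_div_mem_Icc hT hK hq.1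
  have hTq : ramp K t q = T q := ramp_sub_div_self hK (hT.nonneg hq.1) q
  have hmono : ∀ x : Fin n → ℝ, ∀ j, MonotoneOn (ramp K (x j)) (Icc 0 (N / γ)) :=
    fun x j => (monotone_ramp hK.le (x j)).monotoneOn _
  have hφpv : φ pv = pstar := Clears.unique hγ (hmono pv) (hφ pv hpv) hpstar
  have hφt : φ (Function.update pv i t) = q := by
    have hclear : Clears N γ (ramp K ∘ Function.update pv i t) q :=
      (Function.comp_update (ramp K) pv i t).symm ▸ hq.update_of_eq hTq.symm
    refine Clears.unique hγ (hmono _) (hφ _ fun j => ?_) hclear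
    rcases eq_or_ne j i with rfl | hj
    · simpa using ht
    · simpa [hj] using hpv j
  calc utility (c i) T q
      ≤ utility (c i) (ramp K t) q :=
        utility_le_utility_of_le hq.1.1 ((continuous_ramp K t).intervalIntegrable _ _)
          (hT.intervalIntegrable hq.1) (fun p hp => hLip.ramp_le hT hK hq.1 hp) hTq
    _ = uir K (c i) (φ (Function.update pv i t)) t := by
        rw [hφt, utility_ramp _ hK.ne' ht.1 hq.1.1]
    _ ≤ uir K (c i) (φ pv) (pv i) := hNE i t ht
    _ = utility (c i) (ramp K (pv i)) pstar := by
        rw [hφpv, utility_ramp _ hK.ne' (hpv i).1 hpstar.1.1]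

/-- a Nash equilibrium of the restricted game with utilities `u_i^r`
induces, via `S_i(p) = K · max (p - p_i) 0`, a Nash equilibrium of the pay-as-bid
auction game with strategy space `A_K`. -/
theorem stmt16 (n : ℕ) (N γ K : ℝ) (hN : 0 < N) (hγ : 0 < γ) (hK : 0 < K)
    (c : Fin n → ℝ) (hc : ∀ i, 0 ≤ c i)
    (φ : (Fin n → ℝ) → ℝ)
    (hφ : ∀ x : Fin n → ℝ, (∀ j, x j ∈ Icc 0 (N / γ)) →
      φ x ∈ Icc 0 (N / γ) ∧ N - γ * φ x = ∑ j, K * max (φ x - x j) 0)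
    (pv : Fin n → ℝ) (hpv : ∀ j, pv j ∈ Icc 0 (N / γ))
    (hNE : ∀ i : Fin n, ∀ t ∈ Icc (0:ℝ) (N / γ),
      uir K (c i) (φ (Function.update pv i t)) t ≤ uir K (c i) (φ pv) (pv i)) :
    ∀ i : Fin n, ∀ T, Feasible (N / γ) T → KLip (N / γ) K T →
      ∀ pstar q,
        Clears N γ (fun j => fun p => K * max (p - pv j) 0) pstar →
        Clears N γ (Function.update (fun j => fun p => K * max (p - pv j) 0) i T) q →
        utility (c i) T q ≤ utility (c i) (fun p => K * max (p - pv i) 0) pstar :=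
  stmt16_general n N γ K hγ hK c φ hφ pv hpv hNE
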